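/- arXiv:1502.01865 — 2 statements merged into one kernel-verified Lean document; each statement's English description precedes it below -/
import Mathlib

section
/- Let R be a commutative ring and let f and g be multilinear multivariate polynomials in n variables over R, i.e., every variable has degree at most 1 in f and in g. If f(a) = g(a) for every a : Fin n → R with a i ∈ {0, 1} for all i, then f = g as polynomials. -/
open MvPolynomial

private lemma aux_zero {R : Type*} [CommRing R] : ∀ (n : ℕ) (p : MvPolynomial (Fin n) R),
    (∀ i, p.degreeOf i ≤ 1) →
    (∀ a : Fin n → R, (∀ i, a i = 0 ∨ a i = 1) → eval a p = 0) → p = 0 := by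
  intro n
  induction n with
  | zero =>
    intro p _ h
    rw [p.eq_C_of_isEmpty]
    have := h Fin.elim0 (fun i => i.elim0)
    rw [p.eq_C_of_isEmpty, eval_C] at this
    rw [this, map_zero]
  | succ n ih =>
    intro p hp h
    set q := finSuccEquiv R n p with hq
    have hdeg : q.natDegree ≤ 1 := by
      rw [hq, natDegree_finSuccEquiv]; exact hp 0
    have hqform := Polynomial.eq_X_add_C_of_natDegree_le_one hdeg
    set p1 := q.coeff 1 with hp1
    set p0 := q.coeff 0 with hp0
    have heval : ∀ (y : R) (a : Fin n → R),
        eval (Fin.cons y a) p = eval a p1 * y + eval a p0 := by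
      intro y a
      rw [eval_eq_eval_mv_eval', ← hq, hqform]
      simp [Polynomial.eval_map, Polynomial.eval₂_add, Polynomial.eval₂_mul]
    have hml : ∀ j : Fin n, ∀ i : ℕ, (q.coeff i).degreeOf j ≤ 1 :=
      fun j i => le_trans (degreeOf_coeff_finSuccEquiv p j i) (hp j.succ)
    have hzero0 : p0 = 0 := by
      apply ih p0 (fun j => hml j 0)
      intro a ha
      have := h (Fin.cons 0 a) (fun i => by
        refine Fin.cases ?_ (fun j => ?_) i <;> simp [ha _])
      rwa [heval, mul_zero, zero_add] at this
    have hzero1 : p1 = 0 := by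
      apply ih p1 (fun j => hml j 1)
      intro a ha
      have := h (Fin.cons 1 a) (fun i => by
        refine Fin.cases ?_ (fun j => ?_) i <;> simp [ha _])
      rw [heval, hzero0, map_zero, add_zero, mul_one] at this
      exact this
    have hq0 : q = 0 := by rw [hqform, hzero0, hzero1]; simp
    exact (finSuccEquiv R n).injective (by rw [← hq, hq0, map_zero])

theorem stmt_1 {R : Type*} [CommRing R] {n : ℕ}
    (f g : MvPolynomial (Fin n) R)
    (hf : ∀ i, f.degreeOf i ≤ 1) (hg : ∀ i, g.degreeOf i ≤ 1)
    (h : ∀ a : Fin n → R, (∀ i, a i = 0 ∨ a i = 1) → eval a f = eval a g) :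
    f = g := by
  have := aux_zero n (f - g)
    (fun i => le_trans (degreeOf_sub_le i f g) (max_le (hf i) (hg i)))
    (fun a ha => by rw [map_sub, h a ha, sub_self])
  exact sub_eq_zero.mp this
end

section
/- Let A, B, C be finite families of finite subsets of a finite type V with B ∨ C ⊆ A. Suppose that every set in B ∨ C has cardinality at least m, that r ≤ m, and that B or C contains a set of cardinality exactly r. Then |B ∨ C| ≤ deg_r(A) · deg_{m−r}(A). -/
/-- The `r`-th degree of a finite family `A` of subsets of a finite type `V`. -/
def famDeg {V : Type*} [Fintype V] [DecidableEq V]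
    (A : Finset (Finset V)) (r : ℕ) : ℕ :=
  ((Finset.univ : Finset V).powersetCard r).sup fun b =>
    (A.filter fun a => b ⊆ a).card

/-- The join `B ∨ C` of two families: all pairwise unions. -/
def famJoin {V : Type*} [DecidableEq V]
    (B C : Finset (Finset V)) : Finset (Finset V) :=
  (B ×ˢ C).image fun p => p.1 ∪ p.2

lemma famJoin_comm {V : Type*} [DecidableEq V] (B C : Finset (Finset V)) :
    famJoin B C = famJoin C B := by
  ext s
  simp only [famJoin, Finset.mem_image, Finset.mem_product, Prod.exists]
  constructor
  · rintro ⟨b, c, ⟨hb, hc⟩, rfl⟩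
    exact ⟨c, b, ⟨hc, hb⟩, Finset.union_comm _ _⟩
  · rintro ⟨c, b, ⟨hc, hb⟩, rfl⟩
    exact ⟨b, c, ⟨hb, hc⟩, Finset.union_comm _ _⟩

lemma aux_6 {V : Type*} [Fintype V] [DecidableEq V]
    (A B C : Finset (Finset V)) (m r : ℕ)
    (hsub : famJoin B C ⊆ A)
    (hm : ∀ a ∈ famJoin B C, m ≤ a.card)
    (hex : ∃ b ∈ B, b.card = r) :
    (famJoin B C).card ≤ famDeg A r * famDeg A (m - r) := by
  classical
  obtain ⟨b₀, hb₀B, hb₀r⟩ := hex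
  set T := C.image (fun c => b₀ ∪ c) with hT
  have hTJ : ∀ t ∈ T, t ∈ famJoin B C := by
    intro t ht
    obtain ⟨c, hc, rfl⟩ := Finset.mem_image.mp ht
    exact Finset.mem_image.mpr ⟨(b₀, c), Finset.mem_product.mpr ⟨hb₀B, hc⟩, rfl⟩
  have hd : ∀ t ∈ T, ∃ e, e ⊆ t \ b₀ ∧ e.card = m - r := by
    intro t ht
    have htA := hm t (hTJ t ht)
    obtain ⟨c, hc, rfl⟩ := Finset.mem_image.mp ht
    have hsub' : b₀ ⊆ b₀ ∪ c := Finset.subset_union_left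
    have hle : m - r ≤ ((b₀ ∪ c) \ b₀).card := by
      rw [Finset.card_sdiff_of_subset hsub', hb₀r]
      omega
    exact Finset.exists_subset_card_eq hle
  choose! d hd1 hd2 using hd
  have h1 : famJoin B C ⊆ T.biUnion (fun t => A.filter fun a => d t ⊆ a) := by
    intro s hs
    obtain ⟨⟨b, c⟩, hp, rfl⟩ := Finset.mem_image.mp hs
    obtain ⟨hb, hc⟩ := Finset.mem_product.mp hp
    have ht : b₀ ∪ c ∈ T := Finset.mem_image.mpr ⟨c, hc, rfl⟩
    refine Finset.mem_biUnion.mpr ⟨b₀ ∪ c, ht, Finset.mem_filter.mpr ⟨hsub hs, ?_⟩⟩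
    refine (hd1 _ ht).trans ?_
    intro x hx
    have hx' := Finset.mem_sdiff.mp hx
    rcases Finset.mem_union.mp hx'.1 with h | h
    · exact absurd h hx'.2
    · exact Finset.mem_union_right _ h
  have hfilter : ∀ t ∈ T, (A.filter fun a => d t ⊆ a).card ≤ famDeg A (m - r) := by
    intro t ht
    have hmem : d t ∈ (Finset.univ : Finset V).powersetCard (m - r) :=
      Finset.mem_powersetCard.mpr ⟨Finset.subset_univ _, hd2 t ht⟩
    exact Finset.le_sup (f := fun b => (A.filter fun a => b ⊆ a).card) hmem
  have hTcard : T.card ≤ famDeg A r := by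
    have hTsub : T ⊆ A.filter fun a => b₀ ⊆ a := by
      intro t ht
      refine Finset.mem_filter.mpr ⟨hsub (hTJ t ht), ?_⟩
      obtain ⟨c, hc, rfl⟩ := Finset.mem_image.mp ht
      exact Finset.subset_union_left
    have hmem : b₀ ∈ (Finset.univ : Finset V).powersetCard r :=
      Finset.mem_powersetCard.mpr ⟨Finset.subset_univ _, hb₀r⟩
    exact (Finset.card_le_card hTsub).trans
      (Finset.le_sup (f := fun b => (A.filter fun a => b ⊆ a).card) hmem)
  calc (famJoin B C).card
      ≤ (T.biUnion (fun t => A.filter fun a => d t ⊆ a)).card := Finset.card_le_card h1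
    _ ≤ ∑ t ∈ T, (A.filter fun a => d t ⊆ a).card := Finset.card_biUnion_le
    _ ≤ ∑ _t ∈ T, famDeg A (m - r) := Finset.sum_le_sum hfilter
    _ = T.card * famDeg A (m - r) := by rw [Finset.sum_const, smul_eq_mul]
    _ ≤ famDeg A r * famDeg A (m - r) := Nat.mul_le_mul_right _ hTcard

theorem stmt_6 {V : Type*} [Fintype V] [DecidableEq V]
    (A B C : Finset (Finset V)) (m r : ℕ)
    (hsub : famJoin B C ⊆ A)
    (hm : ∀ a ∈ famJoin B C, m ≤ a.card)
    (hr : r ≤ m)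
    (hex : (∃ b ∈ B, b.card = r) ∨ ∃ c ∈ C, c.card = r) :
    (famJoin B C).card ≤ famDeg A r * famDeg A (m - r) := by
  rcases hex with h | h
  · exact aux_6 A B C m r hsub hm h
  · rw [famJoin_comm] at hsub hm ⊢
    exact aux_6 A C B m r hsub hm h
end
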